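/- arXiv:2312.14855 — 2 statements merged into one kernel-verified Lean document; each statement's English description precedes it below -/
import Mathlib

section
/- The map ω : ℝ^{2N} → ℝ^{2N}, (y,θ) ↦ (x,p), where x ∈ ℝ^N is the unique solution of y_i = x_i + Σ_{j≠i} ψ_θ(x_i−x_j, θ_i−θ_j) and then p is given by p_i = θ_i + Σ_{j≠i} ψ_x(x_i−x_j, θ_i−θ_j), is a C¹ diffeomorphism of ℝ^{2N} onto ℝ^{2N}. -/
/-!
Write `Φ (x, θ) = (y, θ)` and `Ψ (x, θ) = (x, p)`, so that `ω = Ψ ∘ Φ⁻¹`. Each of `Φ`, `Ψ` preserves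
one factor, and on each fibre it is `u ↦ u + (pairwise interaction)` with an interaction that is
odd and monotone in the moving variable; for `ψ_θ` in `x` this is the supermodularity of `ψ`
expressed by `ψ_{xθ} ≥ 0`. Symmetrising over pairs `(i, j)` gives strong monotonicity
`⟪G u - G v, u - v⟫ ≥ ‖u - v‖²`, so every fibre map is antilipschitz. An antilipschitz `C¹`
self-map of `ℝⁿ` has injective derivative everywhere, hence open range by the inverse function
theorem, and closed range by completeness, so it is a `C¹` diffeomorphism; the same then holds
for `Φ`, `Ψ` and `ω`.
-/

open Function Set Filter Topology Finset Matrix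
open scoped NNReal RealInnerProductSpace

section InverseFunction

variable {E : Type*} [NormedAddCommGroup E] [NormedSpace ℝ E] [FiniteDimensional ℝ E]
  {f g : E → E} {f' : E → E →L[ℝ] E} {n : WithTop ℕ∞}

lemma ContinuousLinearMap.exists_equiv_of_injective {A : E →L[ℝ] E} (hA : Injective A) :
    ∃ e : E ≃L[ℝ] E, (e : E →L[ℝ] E) = A :=
  ⟨(LinearEquiv.ofInjectiveEndo A.toLinearMap hA).toContinuousLinearEquiv, rfl⟩

lemma ContDiff.isOpenMap_of_injective_fderiv (hf : ContDiff ℝ n f) (hn : n ≠ 0)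
    (hf' : ∀ x, HasFDerivAt f (f' x) x) (hinj : ∀ x, Injective (f' x)) : IsOpenMap f := by
  choose e he using fun x => ContinuousLinearMap.exists_equiv_of_injective (hinj x)
  exact isOpenMap_of_hasStrictFDerivAt_equiv fun x =>
    hf.contDiffAt.hasStrictFDerivAt' (he x ▸ hf' x) hn

/-- Near each point, `g` agrees with the local inverse given by the inverse function theorem. -/
lemma ContDiff.of_rightInverse (hf : ContDiff ℝ n f) (hn : n ≠ 0)
    (hf' : ∀ x, HasFDerivAt f (f' x) x) (hinj : ∀ x, Injective (f' x)) (hfi : Injective f)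
    (hg : RightInverse g f) : ContDiff ℝ n g := by
  refine contDiff_iff_contDiffAt.2 fun b => ?_
  rw [← hg b]
  obtain ⟨e, he⟩ := ContinuousLinearMap.exists_equiv_of_injective (hinj (g b))
  have hfe : HasFDerivAt f (e : E →L[ℝ] E) (g b) := he ▸ hf' (g b)
  refine (hf.contDiffAt.to_localInverse hfe hn).congr_of_eventuallyEq ?_
  filter_upwards [(hf.contDiffAt.hasStrictFDerivAt' hfe hn).eventually_right_inverse] with y hy
  exact hfi (by rw [hg y]; exact hy.symm)

end InverseFunction

lemma AntilipschitzWith.isClosed_range_of_continuous {α β : Type*} [MetricSpace α]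
    [CompleteSpace α] [MetricSpace β] {K : ℝ≥0} {f : α → β} (hf : AntilipschitzWith K f)
    (hc : Continuous f) : IsClosed (range f) := by
  refine isClosed_of_closure_subset fun b hb => ?_
  have : (comap f (𝓝 b)).NeBot := comap_neBot_iff_frequently.2 (mem_closure_iff_frequently.1 hb)
  obtain ⟨a, ha⟩ := CompleteSpace.complete ((cauchy_nhds (a := b)).comap hf.comap_uniformity_le)
  exact ⟨a, tendsto_nhds_unique ((hc.tendsto a).mono_left ha) tendsto_comap⟩

lemma HasFDerivAt.antilipschitzWith {E F : Type*} [NormedAddCommGroup E] [NormedSpace ℝ E]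
    [NormedAddCommGroup F] [NormedSpace ℝ F] {f : E → F} {f' : E →L[ℝ] F} {x : E} {K : ℝ≥0}
    (hf : HasFDerivAt f f' x) (hK : AntilipschitzWith K f) : AntilipschitzWith K f' := by
  refine f'.antilipschitz_of_bound fun v => ?_
  have hlim := (hf.lim v (c := id) tendsto_abs_atTop_atTop).norm.const_mul (K : ℝ)
  refine ge_of_tendsto hlim ((eventually_gt_atTop 0).mono fun t ht => ?_)
  have := hK.le_mul_dist (x + t⁻¹ • v) x
  rw [dist_eq_norm, dist_eq_norm, add_sub_cancel_left, norm_smul, norm_inv] at this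
  rw [id, norm_smul, mul_left_comm, ← div_le_iff₀' (norm_pos_iff.2 ht.ne'), div_eq_inv_mul]
  exact this

lemma AntilipschitzWith.surjective_of_contDiff {E : Type*} [NormedAddCommGroup E]
    [NormedSpace ℝ E] [FiniteDimensional ℝ E] {f : E → E} {n : WithTop ℕ∞} {K : ℝ≥0}
    (hK : AntilipschitzWith K f) (hf : ContDiff ℝ n f) (hn : n ≠ 0) : Surjective f := by
  have hopen : IsOpen (range f) :=
    (hf.isOpenMap_of_injective_fderiv hn (fun x => (hf.differentiable hn x).hasFDerivAt)
      fun x => ((hf.differentiable hn x).hasFDerivAt.antilipschitzWith hK).injective).isOpen_range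
  have hclosed := hK.isClosed_range_of_continuous hf.continuous
  exact range_eq_univ.1 (IsClopen.eq_univ ⟨hclosed, hopen⟩ (range_nonempty f))

section Fiberwise

variable {E F : Type*} [NormedAddCommGroup E] [NormedSpace ℝ E] [NormedAddCommGroup F]
  [NormedSpace ℝ F]

lemma ContinuousLinearMap.injective_prod_snd {A : E × F →L[ℝ] E}
    (hA : Injective (A.comp (ContinuousLinearMap.inl ℝ E F))) :
    Injective (A.prod (ContinuousLinearMap.snd ℝ E F)) := by
  refine (injective_iff_map_eq_zero _).2 fun w hw => ?_
  have hw₂ : w.2 = 0 := congrArg Prod.snd hw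
  have hw₁ : w.1 = 0 := hA <| by
    rw [map_zero, ContinuousLinearMap.comp_apply, ContinuousLinearMap.inl_apply, ← hw₂]
    exact congrArg Prod.fst hw
  exact Prod.ext hw₁ hw₂

variable [FiniteDimensional ℝ E] [FiniteDimensional ℝ F] {n : WithTop ℕ∞}

theorem exists_equiv_fiberwise_left {f : E × F → E} (hf : ContDiff ℝ n f) (hn : n ≠ 0)
    (hK : ∀ b, ∃ K, AntilipschitzWith K fun a => f (a, b)) :
    ∃ e : E × F ≃ E × F, ⇑e = (fun p => (f p, p.2)) ∧ ContDiff ℝ n e ∧ ContDiff ℝ n e.symm := by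
  choose K hK using hK
  have hfib : ∀ b, ContDiff ℝ n fun a => f (a, b) :=
    fun b => hf.comp (contDiff_id.prodMk contDiff_const)
  have hbij : Bijective fun p : E × F => (f p, p.2) := by
    refine ⟨?_, fun c => ?_⟩
    · rintro ⟨a, b⟩ ⟨a', b'⟩ h
      obtain ⟨h₁, rfl⟩ := Prod.ext_iff.1 h
      exact Prod.ext ((hK b).injective h₁) rfl
    · obtain ⟨a, ha⟩ := (hK c.2).surjective_of_contDiff (hfib c.2) hn c.1
      exact ⟨(a, c.2), Prod.ext ha rfl⟩
  have hT : ContDiff ℝ n fun p : E × F => (f p, p.2) := hf.prodMk contDiff_snd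
  have hf' : ∀ p, HasFDerivAt f (fderiv ℝ f p) p := fun p => (hf.differentiable hn p).hasFDerivAt
  have hinj : ∀ p : E × F, Injective (fderiv ℝ f p |>.comp (ContinuousLinearMap.inl ℝ E F)) :=
    fun p => (((hf' p).comp p.1 (hasFDerivAt_prodMk_left p.1 p.2)).antilipschitzWith
      (hK p.2)).injective
  refine ⟨Equiv.ofBijective _ hbij, rfl, hT, hT.of_rightInverse hn
    (fun p => (hf' p).prodMk hasFDerivAt_snd)
    (fun p => ContinuousLinearMap.injective_prod_snd (hinj p)) hbij.1
    (Equiv.ofBijective _ hbij).right_inv⟩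

theorem exists_equiv_fiberwise_right {g : E × F → F} (hg : ContDiff ℝ n g) (hn : n ≠ 0)
    (hK : ∀ a, ∃ K, AntilipschitzWith K fun b => g (a, b)) :
    ∃ e : E × F ≃ E × F, ⇑e = (fun p => (p.1, g p)) ∧ ContDiff ℝ n e ∧ ContDiff ℝ n e.symm := by
  have hswap : ContDiff ℝ n (Prod.swap : E × F → F × E) := contDiff_snd.prodMk contDiff_fst
  have hswap' : ContDiff ℝ n (Prod.swap : F × E → E × F) := contDiff_snd.prodMk contDiff_fst
  obtain ⟨e, he, heC, heC'⟩ := exists_equiv_fiberwise_left (hg.comp hswap') hn hK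
  refine ⟨(Equiv.prodComm E F).trans (e.trans (Equiv.prodComm F E)), ?_, ?_, ?_⟩
  · ext p <;> simp [he]
  · exact hswap'.comp (heC.comp hswap)
  · exact hswap'.comp (heC'.comp hswap)

end Fiberwise

lemma antilipschitzWith_one_of_norm_sq_le_inner {E : Type*} [NormedAddCommGroup E]
    [InnerProductSpace ℝ E] {G : E → E} (hG : ∀ u v, ‖u - v‖ ^ 2 ≤ ⟪G u - G v, u - v⟫) :
    AntilipschitzWith 1 G := by
  refine AntilipschitzWith.of_le_mul_dist fun u v => ?_
  rw [dist_eq_norm, dist_eq_norm, NNReal.coe_one, one_mul]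
  have := (hG u v).trans (real_inner_le_norm _ _)
  nlinarith [norm_nonneg (u - v), norm_nonneg (G u - G v)]

section Pairwise

variable {ι : Type*} [Fintype ι]

lemma antilipschitzWith_of_dotProduct_le {G : (ι → ℝ) → ι → ℝ}
    (hG : ∀ u v, (u - v) ⬝ᵥ (u - v) ≤ (G u - G v) ⬝ᵥ (u - v)) :
    AntilipschitzWith (NNReal.sqrt (Fintype.card ι)) G := by
  let G₂ : EuclideanSpace ℝ ι → EuclideanSpace ℝ ι := fun u => WithLp.toLp 2 (G u.ofLp)
  have hG₂ : AntilipschitzWith 1 G₂ := antilipschitzWith_one_of_norm_sq_le_inner fun u v => by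
    rw [← WithLp.toLp_ofLp 2 u, ← WithLp.toLp_ofLp 2 v, ← WithLp.toLp_sub,
      EuclideanSpace.norm_sq_eq]
    simpa [G₂, EuclideanSpace.inner_eq_star_dotProduct, dotProduct, sq] using
      (hG u.ofLp v.ofLp).trans_eq (dotProduct_comm _ _)
  have := (PiLp.antilipschitzWith_ofLp 2 fun _ : ι => ℝ).comp
    (hG₂.comp (PiLp.antilipschitzWith_toLp 2 fun _ : ι => ℝ))
  convert this using 1
  · simp [NNReal.sqrt_eq_rpow]
  · rfl

lemma sum_sum_erase_mul_nonneg_of_antisymm [DecidableEq ι] (T : ι → ι → ℝ) (w : ι → ℝ)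
    (hT : ∀ i j, T j i = -T i j) (hTw : ∀ i j, 0 ≤ T i j * (w i - w j)) :
    0 ≤ ∑ i, (∑ j ∈ univ.erase i, T i j) * w i := by
  have hdiag : ∀ i, T i i = 0 := fun i => by linarith [hT i i]
  simp only [fun i => Finset.sum_erase univ (hdiag i), Finset.sum_mul]
  have hswap : ∑ i, ∑ j, T i j * w i = -∑ i, ∑ j, T i j * w j := by
    rw [Finset.sum_comm, ← Finset.sum_neg_distrib]
    refine Finset.sum_congr rfl fun i _ => ?_
    rw [← Finset.sum_neg_distrib]
    exact Finset.sum_congr rfl fun j _ => by rw [hT]; ring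
  have hpos : 0 ≤ ∑ i, ∑ j, T i j * (w i - w j) :=
    Finset.sum_nonneg fun i _ => Finset.sum_nonneg fun j _ => hTw i j
  simp only [mul_sub, Finset.sum_sub_distrib] at hpos
  linarith

variable [DecidableEq ι]

def pairwiseShift (φ : ℝ → ℝ → ℝ) (b u : ι → ℝ) : ι → ℝ :=
  fun i => u i + ∑ j ∈ univ.erase i, φ (u i - u j) (b i - b j)

lemma ContDiff.pairwiseShift {E : Type*} [NormedAddCommGroup E] [NormedSpace ℝ E]
    {n : WithTop ℕ∞} {φ : ℝ → ℝ → ℝ} {b u : E → ι → ℝ} (hφ : ContDiff ℝ n (uncurry φ))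
    (hb : ContDiff ℝ n b) (hu : ContDiff ℝ n u) :
    ContDiff ℝ n fun z => _root_.pairwiseShift φ (b z) (u z) := by
  have hb' := contDiff_pi.1 hb
  have hu' := contDiff_pi.1 hu
  exact contDiff_pi.2 fun i => (hu' i).add <| ContDiff.sum fun j _ =>
    hφ.comp (((hu' i).sub (hu' j)).prodMk ((hb' i).sub (hb' j)))

lemma dotProduct_sub_le_pairwiseShift_sub {φ : ℝ → ℝ → ℝ} (hodd : ∀ x s, φ (-x) (-s) = -φ x s)
    (hmono : ∀ s, Monotone (φ · s)) (b u v : ι → ℝ) :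
    (u - v) ⬝ᵥ (u - v) ≤ (pairwiseShift φ b u - pairwiseShift φ b v) ⬝ᵥ (u - v) := by
  set T : ι → ι → ℝ := fun i j => φ (u i - u j) (b i - b j) - φ (v i - v j) (b i - b j)
  have hT : ∀ i j, T j i = -T i j := fun i j => by
    simp only [T, ← neg_sub (u i), ← neg_sub (v i), ← neg_sub (b i), hodd]
    ring
  have hTw : ∀ i j, 0 ≤ T i j * ((u - v) i - (u - v) j) := fun i j => by
    rcases le_total (v i - v j) (u i - u j) with h | h
    · exact mul_nonneg (sub_nonneg.2 (hmono _ h)) (by simp only [Pi.sub_apply]; linarith)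
    · exact mul_nonneg_of_nonpos_of_nonpos (sub_nonpos.2 (hmono _ h))
        (by simp only [Pi.sub_apply]; linarith)
  have hsplit : (pairwiseShift φ b u - pairwiseShift φ b v) ⬝ᵥ (u - v)
      = (u - v) ⬝ᵥ (u - v) + ∑ i, (∑ j ∈ univ.erase i, T i j) * (u - v) i := by
    simp only [dotProduct, pairwiseShift, T, Pi.sub_apply, Finset.sum_sub_distrib,
      ← Finset.sum_add_distrib]
    exact Finset.sum_congr rfl fun i _ => by ring
  linarith [sum_sum_erase_mul_nonneg_of_antisymm T (u - v) hT hTw]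

lemma antilipschitzWith_pairwiseShift {φ : ℝ → ℝ → ℝ} (hodd : ∀ x s, φ (-x) (-s) = -φ x s)
    (hmono : ∀ s, Monotone (φ · s)) (b : ι → ℝ) :
    AntilipschitzWith (NNReal.sqrt (Fintype.card ι)) (pairwiseShift φ b) :=
  antilipschitzWith_of_dotProduct_le (dotProduct_sub_le_pairwiseShift_sub hodd hmono b)

variable {φ : ℝ → ℝ → ℝ} {n : WithTop ℕ∞}

theorem exists_equiv_pairwiseShift_left (hφ : ContDiff ℝ n (uncurry φ)) (hn : n ≠ 0)
    (hodd : ∀ x s, φ (-x) (-s) = -φ x s) (hmono : ∀ s, Monotone (φ · s)) :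
    ∃ e : (ι → ℝ) × (ι → ℝ) ≃ (ι → ℝ) × (ι → ℝ),
      ⇑e = (fun p => (pairwiseShift φ p.2 p.1, p.2)) ∧ ContDiff ℝ n e ∧ ContDiff ℝ n e.symm :=
  exists_equiv_fiberwise_left (hφ.pairwiseShift contDiff_snd contDiff_fst) hn
    fun b => ⟨_, antilipschitzWith_pairwiseShift hodd hmono b⟩

theorem exists_equiv_pairwiseShift_right (hφ : ContDiff ℝ n (uncurry φ)) (hn : n ≠ 0)
    (hodd : ∀ x s, φ (-x) (-s) = -φ x s) (hmono : ∀ s, Monotone (φ · s)) :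
    ∃ e : (ι → ℝ) × (ι → ℝ) ≃ (ι → ℝ) × (ι → ℝ),
      ⇑e = (fun p => (p.1, pairwiseShift φ p.1 p.2)) ∧ ContDiff ℝ n e ∧ ContDiff ℝ n e.symm :=
  exists_equiv_fiberwise_right (hφ.pairwiseShift contDiff_fst contDiff_snd) hn
    fun b => ⟨_, antilipschitzWith_pairwiseShift hodd hmono b⟩

end Pairwise

section PartialDerivatives

variable {ψ ψx ψθ : ℝ → ℝ → ℝ}

lemma contDiff_uncurry_of_hasDerivAt_left {m n : WithTop ℕ∞} (hψ : ContDiff ℝ m (uncurry ψ))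
    (hmn : n + 1 ≤ m) (hψx : ∀ x t, HasDerivAt (ψ · t) (ψx x t) x) :
    ContDiff ℝ n (uncurry ψx) := by
  have hdiff := (hψ.of_le hmn).differentiable (by simp)
  have hψx_eq : uncurry ψx = fun q => fderiv ℝ (uncurry ψ) q (1, 0) := by
    funext ⟨x, t⟩
    have h := (hdiff (x, t)).hasFDerivAt.comp_hasDerivAt x
      ((hasDerivAt_id' x).prodMk (hasDerivAt_const x t))
    exact (hψx x t).unique h
  rw [hψx_eq]
  exact (hψ.fderiv_right hmn).clm_apply contDiff_const

lemma contDiff_uncurry_of_hasDerivAt_right {m n : WithTop ℕ∞} (hψ : ContDiff ℝ m (uncurry ψ))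
    (hmn : n + 1 ≤ m) (hψθ : ∀ x t, HasDerivAt (ψ x ·) (ψθ x t) t) :
    ContDiff ℝ n (uncurry ψθ) :=
  (contDiff_uncurry_of_hasDerivAt_left (ψ := flip ψ) (hψ.comp (contDiff_snd.prodMk contDiff_fst))
    hmn fun t x => hψθ x t).comp (contDiff_snd.prodMk contDiff_fst)

lemma hasDerivAt_left_odd_of_even (hsym : ∀ x t, ψ (-x) (-t) = ψ x t)
    (hψx : ∀ x t, HasDerivAt (ψ · t) (ψx x t) x) (x t : ℝ) : ψx (-x) (-t) = -ψx x t := by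
  have h := (hψx (-x) (-t)).comp x (hasDerivAt_neg x)
  simp only [Function.comp_def, hsym] at h
  linarith [(hψx x t).unique h]

/-- Supermodularity: `x ↦ ψ x (t + h) - ψ x t` is monotone for `h > 0`, and `ψθ x t` is the limit
of its quotients by `h`. -/
lemma monotone_deriv_right_of_monotone_deriv_left (hψx : ∀ x t, HasDerivAt (ψ · t) (ψx x t) x)
    (hψθ : ∀ x t, HasDerivAt (ψ x ·) (ψθ x t) t) (hmono : ∀ x, Monotone (ψx x)) (t : ℝ) :
    Monotone (ψθ · t) := by
  intro x₁ x₂ hx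
  have hsuper : ∀ h > 0, ψ x₁ (t + h) - ψ x₁ t ≤ ψ x₂ (t + h) - ψ x₂ t := fun h hh =>
    monotone_of_hasDerivAt_nonneg (fun x => (hψx x (t + h)).sub (hψx x t))
      (fun x => sub_nonneg.2 (hmono x (by linarith))) hx
  exact le_of_tendsto_of_tendsto (hψθ x₁ t).tendsto_slope_zero_right
    (hψθ x₂ t).tendsto_slope_zero_right <| eventually_mem_nhdsWithin.mono fun h hh =>
      smul_le_smul_of_nonneg_left (hsuper h hh) (inv_nonneg.2 (le_of_lt hh))

end PartialDerivatives

theorem stmt3_general (N : ℕ)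
    (ψ ψx ψθ ψxθ : ℝ → ℝ → ℝ)
    (hC2 : ContDiff ℝ 2 (fun q : ℝ × ℝ => ψ q.1 q.2))
    (hψx : ∀ x t, HasDerivAt (fun x' => ψ x' t) (ψx x t) x)
    (hψθ : ∀ x t, HasDerivAt (fun t' => ψ x t') (ψθ x t) t)
    (hψxθ : ∀ x t, HasDerivAt (fun t' => ψx x t') (ψxθ x t) t)
    (hpos : ∀ x t, 0 ≤ ψxθ x t)
    (hsym : ∀ x t, ψ (-x) (-t) = ψ x t)
    (ω : (Fin N → ℝ) × (Fin N → ℝ) → (Fin N → ℝ) × (Fin N → ℝ))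
    (hω1 : ∀ (y θ : Fin N → ℝ) (i : Fin N),
      y i = (ω (y, θ)).1 i
        + ∑ j ∈ Finset.univ.erase i,
            ψθ ((ω (y, θ)).1 i - (ω (y, θ)).1 j) (θ i - θ j))
    (hω2 : ∀ (y θ : Fin N → ℝ) (i : Fin N),
      (ω (y, θ)).2 i = θ i
        + ∑ j ∈ Finset.univ.erase i,
            ψx ((ω (y, θ)).1 i - (ω (y, θ)).1 j) (θ i - θ j)) :
    Function.Bijective ω ∧ ContDiff ℝ 1 ω ∧ ContDiff ℝ 1 (Function.invFun ω) := by
  have hψθC : ContDiff ℝ 1 (uncurry ψθ) :=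
    contDiff_uncurry_of_hasDerivAt_right hC2 (by norm_num) hψθ
  have hψxC : ContDiff ℝ 1 (uncurry (flip ψx)) :=
    (contDiff_uncurry_of_hasDerivAt_left hC2 (by norm_num) hψx).comp
      (contDiff_snd.prodMk contDiff_fst)
  have hψθodd : ∀ x t, ψθ (-x) (-t) = -ψθ x t := fun x t =>
    hasDerivAt_left_odd_of_even (ψ := flip ψ) (fun t x => hsym x t) (fun t x => hψθ x t) t x
  have hψxodd : ∀ t x, flip ψx (-t) (-x) = -flip ψx t x := fun t x =>
    hasDerivAt_left_odd_of_even hsym hψx x t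
  have hψxmono : ∀ x, Monotone (ψx x) := fun x => monotone_of_hasDerivAt_nonneg (hψxθ x) (hpos x)
  have hψθmono : ∀ t, Monotone (ψθ · t) :=
    monotone_deriv_right_of_monotone_deriv_left hψx hψθ hψxmono
  obtain ⟨Φ, hΦ, hΦC, hΦC'⟩ :=
    exists_equiv_pairwiseShift_left (ι := Fin N) hψθC one_ne_zero hψθodd hψθmono
  obtain ⟨Ψ, hΨ, hΨC, hΨC'⟩ :=
    exists_equiv_pairwiseShift_right (ι := Fin N) hψxC one_ne_zero hψxodd hψxmono
  have hΦω : ∀ z, Φ ((ω z).1, z.2) = z := fun ⟨y, θ⟩ => by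
    rw [hΦ]
    exact Prod.ext (funext fun i => (hω1 y θ i).symm) rfl
  have hω : ω = Φ.symm.trans Ψ := funext fun ⟨y, θ⟩ => by
    rw [Equiv.trans_apply, Φ.symm_apply_eq.2 (hΦω (y, θ)).symm, hΨ]
    exact Prod.ext rfl (funext (hω2 y θ))
  subst hω
  refine ⟨(Φ.symm.trans Ψ).bijective, hΨC.comp hΦC', ?_⟩
  rw [invFun_eq_of_injective_of_rightInverse (Φ.symm.trans Ψ).injective
    (Φ.symm.trans Ψ).rightInverse_symm]
  exact hΦC.comp hΨC'

/-- The map `ω : (y,θ) ↦ (x,p)` of the semiclassical Bethe system, defined by solving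
`yᵢ = xᵢ + ∑_{j≠i} ψ_θ(xᵢ−xⱼ, θᵢ−θⱼ)` for `x` and setting
`pᵢ = θᵢ + ∑_{j≠i} ψ_x(xᵢ−xⱼ, θᵢ−θⱼ)`, is a `C¹` diffeomorphism of `ℝ^{2N}`. -/
theorem stmt3 (N : ℕ) (ε : ℝ) (hε : 0 < ε)
    (ψ ψx ψθ ψxθ : ℝ → ℝ → ℝ)
    (hC2 : ContDiff ℝ 2 (fun q : ℝ × ℝ => ψ q.1 q.2))
    (hψx : ∀ x t, HasDerivAt (fun x' => ψ x' t) (ψx x t) x)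
    (hψθ : ∀ x t, HasDerivAt (fun t' => ψ x t') (ψθ x t) t)
    (hψxθ : ∀ x t, HasDerivAt (fun t' => ψx x t') (ψxθ x t) t)
    (hpos : ∀ x t, 0 ≤ ψxθ x t)
    (hsym : ∀ x t, ψ (-x) (-t) = ψ x t)
    (hrange : ∀ x t, ε ≤ |x| → ψx x t = 0)
    (ω : (Fin N → ℝ) × (Fin N → ℝ) → (Fin N → ℝ) × (Fin N → ℝ))
    (hω1 : ∀ (y θ : Fin N → ℝ) (i : Fin N),
      y i = (ω (y, θ)).1 i
        + ∑ j ∈ Finset.univ.erase i,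
            ψθ ((ω (y, θ)).1 i - (ω (y, θ)).1 j) (θ i - θ j))
    (hω2 : ∀ (y θ : Fin N → ℝ) (i : Fin N),
      (ω (y, θ)).2 i = θ i
        + ∑ j ∈ Finset.univ.erase i,
            ψx ((ω (y, θ)).1 i - (ω (y, θ)).1 j) (θ i - θ j)) :
    Function.Bijective ω ∧ ContDiff ℝ 1 ω ∧ ContDiff ℝ 1 (Function.invFun ω) :=
  stmt3_general N ψ ψx ψθ ψxθ hC2 hψx hψθ hψxθ hpos hsym ω hω1 hω2
end

section
/- For λ ∈ ℝ and (x,p) ∈ ℝ^{2N} let θ^λ = θ^λ(x,p) ∈ ℝ^N be the unique solution of p_i = θ^λ_i + λ Σ_{j≠i} ψ_x(x_i−x_j, θ^λ_i−θ^λ_j) for i = 1,…,N, and define the N×N matrix A^λ by A^λ_{ij} = δ_{ij}(1 + λ Σ_{k≠i} ψ_{xθ}(x_i−x_k, θ^λ_i−θ^λ_k)) − (1−δ_{ij}) λ ψ_{xθ}(x_i−x_j, θ^λ_i−θ^λ_j). Then for λ ≥ 0 the map λ ↦ θ^λ(x,p) is differentiable, A^λ is invertible, and ∂θ^λ_i/∂λ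 = − Σ_{j=1}^N Σ_{k≠j} (A^λ)^{−1}_{ij} ψ_x(x_j−x_k, θ^λ_j−θ^λ_k). -/
/-!
Write `S(θ)ᵢ = ∑_{j ≠ i} ψ_x(xᵢ - xⱼ, θᵢ - θⱼ)`, so that `θ^λ` solves `θ + λ S(θ) = p`.
Since `ψ` is even, `ψ_x` is odd, and by `ψ_xθ ≥ 0` it is increasing in `θ`; symmetrising the pair
sums then shows `⟨θ - θ', (θ + λ S θ) - (θ' + λ S θ')⟩ ≥ |θ - θ'|²` for `λ ≥ 0`, so the Bethe
equations have at most one solution. The linearisation `A^λ = 1 + λ L` (with `L` the graph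
Laplacian of the nonnegative symmetric weights `ψ_xθ`) obeys the same estimate, hence is
invertible. The implicit function theorem for `(λ, θ) ↦ θ + λ S(θ)` then gives a differentiable
local solution, which by uniqueness is `θ^λ` for `λ ≥ 0`, with derivative `-(A^λ)⁻¹ S(θ^λ)`.
-/

open Finset Filter Topology Matrix

theorem ContinuousLinearMap.isInvertible_of_injective {𝕜 E : Type*} [NontriviallyNormedField 𝕜]
    [CompleteSpace 𝕜] [NormedAddCommGroup E] [NormedSpace 𝕜 E] [FiniteDimensional 𝕜 E]
    (f : E →L[𝕜] E) (hf : Function.Injective f) : f.IsInvertible :=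
  ⟨(LinearEquiv.ofInjectiveEndo (f : E →ₗ[𝕜] E) hf).toContinuousLinearEquiv, rfl⟩

theorem HasStrictFDerivAt.hasDerivWithinAt_of_unique_solution {𝕜 E F : Type*}
    [NontriviallyNormedField 𝕜] [CompleteSpace 𝕜]
    [NormedAddCommGroup E] [NormedSpace 𝕜 E] [CompleteSpace E]
    [NormedAddCommGroup F] [NormedSpace 𝕜 F] [CompleteSpace F]
    {f : 𝕜 × E → F} {f' : 𝕜 × E →L[𝕜] F} {g : 𝕜 → E} {s : Set 𝕜} {a : 𝕜} {w : E}
    (hf : HasStrictFDerivAt f f' (a, g a)) (hf₂ : (f' ∘L .inr 𝕜 𝕜 E).IsInvertible)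
    (hw : f' (1, w) = 0) (huniq : ∀ x ∈ s, ∀ y, f (x, y) = f (a, g a) → y = g x) :
    HasDerivWithinAt g w s a := by
  set φ := hf.implicitFunctionOfProdDomain hf₂
  have hφa : φ a = g a :=
    (hf.eventually_apply_eq_iff_implicitFunctionOfProdDomain hf₂).self_of_nhds.mp rfl
  have hgφ : g =ᶠ[𝓝[s] a] φ := by
    filter_upwards [nhdsWithin_le_nhds (hf.eventually_apply_implicitFunctionOfProdDomain hf₂),
      self_mem_nhdsWithin] with x hx hxs
    exact (huniq x hxs _ hx).symm
  have hw' : w = (-(f' ∘L .inr 𝕜 𝕜 E).inverse ∘L (f' ∘L .inl 𝕜 𝕜 E)) 1 := by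
    have he : f' (1, 0) = -(f' ∘L .inr 𝕜 𝕜 E) w := by
      rw [eq_neg_iff_add_eq_zero, ← hw, ContinuousLinearMap.comp_apply,
        ContinuousLinearMap.inr_apply, ← map_add, Prod.mk_add_mk, add_zero, zero_add]
    rw [_root_.neg_apply, ContinuousLinearMap.comp_apply,
      ContinuousLinearMap.comp_apply, ContinuousLinearMap.inl_apply, he, map_neg, neg_neg,
      hf₂.inverse_apply_self]
  rw [hw']
  exact (hf.hasStrictFDerivAt_implicitFunctionOfProdDomain hf₂).hasFDerivAt.hasDerivAt
    |>.hasDerivWithinAt.congr_of_eventuallyEq hgφ hφa.symm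

theorem partial_fst_odd_of_even {ψ ψx : ℝ → ℝ → ℝ}
    (hψx : ∀ x t, HasDerivAt (fun x' => ψ x' t) (ψx x t) x)
    (hsym : ∀ x t, ψ (-x) (-t) = ψ x t) (x t : ℝ) : ψx (-x) (-t) = -ψx x t := by
  have h := (hψx (-x) (-t)).comp x (hasDerivAt_neg x)
  simp only [Function.comp_def, hsym] at h
  linarith [h.unique (hψx x t)]

theorem partial_snd_even_of_odd {φ φθ : ℝ → ℝ → ℝ}
    (hφθ : ∀ x t, HasDerivAt (fun t' => φ x t') (φθ x t) t)
    (hodd : ∀ x t, φ (-x) (-t) = -φ x t) (x t : ℝ) : φθ (-x) (-t) = φθ x t := by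
  have h := (hφθ (-x) (-t)).comp t (hasDerivAt_neg t)
  simp only [Function.comp_def, hodd] at h
  linarith [h.unique (hφθ x t).neg]

theorem contDiff_uncurry_of_hasDerivAt_fst {n : WithTop ℕ∞} {ψ ψx : ℝ → ℝ → ℝ}
    (hψ : ContDiff ℝ (n + 1) fun q : ℝ × ℝ => ψ q.1 q.2)
    (hψx : ∀ x t, HasDerivAt (fun x' => ψ x' t) (ψx x t) x) :
    ContDiff ℝ n fun q : ℝ × ℝ => ψx q.1 q.2 := by
  have hpartial : ∀ q : ℝ × ℝ, ψx q.1 q.2 = fderiv ℝ (fun q : ℝ × ℝ => ψ q.1 q.2) q (1, 0) := by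
    intro q
    have hd := (hψ.differentiable (by simp) q).hasFDerivAt.comp_hasDerivAt_of_eq q.1
      ((hasDerivAt_id q.1).prodMk (hasDerivAt_const q.1 q.2)) rfl
    exact (hψx q.1 q.2).unique hd
  simp only [hpartial]
  exact (hψ.fderiv_right le_rfl).clm_apply contDiff_const

section FinitePairs

variable {ι : Type*} [Fintype ι] [DecidableEq ι]

theorem sum_sum_erase_nonneg_of_add_swap_nonneg {g : ι → ι → ℝ}
    (h : ∀ i k, i ≠ k → 0 ≤ g i k + g k i) : 0 ≤ ∑ i, ∑ k ∈ univ.erase i, g i k := by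
  have hswap : ∑ i, ∑ k ∈ univ.erase i, g k i = ∑ i, ∑ k ∈ univ.erase i, g i k :=
    sum_comm' fun i k => by simp [ne_comm, and_comm]
  have hsum : 0 ≤ ∑ i, ∑ k ∈ univ.erase i, (g i k + g k i) :=
    sum_nonneg fun i _ => sum_nonneg fun k hk => h i k (ne_of_mem_erase hk).symm
  simp only [sum_add_distrib, hswap] at hsum
  linarith

theorem eq_zero_of_add_mul_sum_erase_eq_zero {d : ι → ℝ} {c : ι → ι → ℝ} {t : ℝ} (ht : 0 ≤ t)
    (hc : ∀ i k, i ≠ k → 0 ≤ d i * c i k + d k * c k i)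
    (h : ∀ i, d i + t * ∑ k ∈ univ.erase i, c i k = 0) : d = 0 := by
  have hcross : 0 ≤ ∑ i, ∑ k ∈ univ.erase i, d i * c i k :=
    sum_sum_erase_nonneg_of_add_swap_nonneg hc
  have hzero : ∑ i, d i ^ 2 + t * ∑ i, ∑ k ∈ univ.erase i, d i * c i k = 0 := by
    calc _ = ∑ i, d i * (d i + t * ∑ k ∈ univ.erase i, c i k) := by
          simp only [mul_sum, mul_add, ← sum_add_distrib]
          exact sum_congr rfl fun i _ => by
            rw [sq]; congr 1; exact sum_congr rfl fun k _ => by ring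
      _ = 0 := sum_eq_zero fun i _ => by rw [h i, mul_zero]
  have hsq : ∑ i, d i ^ 2 = 0 :=
    le_antisymm (by nlinarith [mul_nonneg ht hcross]) (sum_nonneg fun i _ => sq_nonneg _)
  funext i
  exact pow_eq_zero_iff two_ne_zero |>.mp <|
    (sum_eq_zero_iff_of_nonneg fun i _ => sq_nonneg (d i)).mp hsq i (mem_univ i)

def pairSum (φ : ℝ → ℝ → ℝ) (x θ : ι → ℝ) (i : ι) : ℝ :=
  ∑ j ∈ univ.erase i, φ (x i - x j) (θ i - θ j)

theorem injective_add_smul_pairSum {φ : ℝ → ℝ → ℝ} (hmono : ∀ c, Monotone (φ c))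
    (hodd : ∀ x t, φ (-x) (-t) = -φ x t) (x : ι → ℝ) {t : ℝ} (ht : 0 ≤ t) :
    Function.Injective fun θ => θ + t • pairSum φ x θ := by
  intro θ θ' hθ
  refine sub_eq_zero.mp (eq_zero_of_add_mul_sum_erase_eq_zero
    (c := fun i k => φ (x i - x k) (θ i - θ k) - φ (x i - x k) (θ' i - θ' k)) ht ?_ ?_)
  · intro i k _
    have hswap : ∀ θ : ι → ℝ, φ (x k - x i) (θ k - θ i) = -φ (x i - x k) (θ i - θ k) := fun θ => by
      rw [← hodd, neg_sub, neg_sub]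
    have hmon : 0 ≤ (φ (x i - x k) (θ i - θ k) - φ (x i - x k) (θ' i - θ' k)) *
        ((θ i - θ k) - (θ' i - θ' k)) :=
      ((hmono (x i - x k)).monovary monotone_id).sub_mul_sub_nonneg _ _
    simp only [hswap, Pi.sub_apply]
    linarith
  · intro i
    have hθi := congrFun hθ i
    simp only [Pi.add_apply, Pi.smul_apply, smul_eq_mul, pairSum] at hθi
    simp only [Pi.sub_apply, sum_sub_distrib]
    linarith

def weightedLaplacian (b : ι → ι → ℝ) : Matrix ι ι ℝ :=
  of fun i j => if i = j then ∑ k ∈ univ.erase i, b i k else -b i j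

theorem weightedLaplacian_mulVec (b : ι → ι → ℝ) (v : ι → ℝ) (i : ι) :
    (weightedLaplacian b *ᵥ v) i = ∑ k ∈ univ.erase i, b i k * (v i - v k) := by
  rw [mulVec, dotProduct, ← add_sum_erase _ _ (mem_univ i)]
  simp only [weightedLaplacian, of_apply, if_pos, mul_sub, sum_sub_distrib, ← sum_mul]
  rw [sub_eq_add_neg, ← sum_neg_distrib]
  refine congrArg _ (sum_congr rfl fun k hk => ?_)
  rw [if_neg (ne_of_mem_erase hk).symm, neg_mul]

theorem isUnit_det_one_add_smul_weightedLaplacian {b : ι → ι → ℝ} (hb : ∀ i k, 0 ≤ b i k)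
    (hbs : ∀ i k, b i k = b k i) {t : ℝ} (ht : 0 ≤ t) :
    IsUnit (1 + t • weightedLaplacian b).det := by
  rw [← isUnit_iff_isUnit_det, ← mulVec_injective_iff_isUnit]
  intro v w hvw
  refine sub_eq_zero.mp (eq_zero_of_add_mul_sum_erase_eq_zero
    (c := fun i k => b i k * ((v - w) i - (v - w) k)) ht ?_ fun i => ?_)
  · intro i k _
    rw [hbs k i]
    nlinarith [hb i k, sq_nonneg ((v - w) i - (v - w) k)]
  · have hzero := congrFun (mulVec_sub (1 + t • weightedLaplacian b) v w) i
    rw [hvw, sub_self, add_mulVec, one_mulVec, smul_mulVec] at hzero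
    simpa [weightedLaplacian_mulVec] using hzero

theorem hasDerivAt_pairSum_add_smul {φ φθ : ℝ → ℝ → ℝ}
    (hφθ : ∀ x t, HasDerivAt (fun t' => φ x t') (φθ x t) t) (x θ v : ι → ℝ) :
    HasDerivAt (fun s : ℝ => pairSum φ x (θ + s • v))
      (weightedLaplacian (fun i k => φθ (x i - x k) (θ i - θ k)) *ᵥ v) 0 := by
  refine hasDerivAt_pi.mpr fun i => ?_
  rw [weightedLaplacian_mulVec]
  refine HasDerivAt.fun_sum fun k _ => ?_
  have hline : HasDerivAt (fun s : ℝ => (θ + s • v) i - (θ + s • v) k) (v i - v k) 0 := by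
    simp only [Pi.add_apply, Pi.smul_apply, smul_eq_mul]
    exact (((hasDerivAt_id 0).mul_const (v i)).const_add (θ i)).sub
      (((hasDerivAt_id 0).mul_const (v k)).const_add (θ k)) |>.congr_deriv (by simp)
  exact (hφθ (x i - x k) _).comp_of_eq 0 hline (by simp)

theorem contDiff_pairSum {n : WithTop ℕ∞} {φ : ℝ → ℝ → ℝ}
    (hφ : ContDiff ℝ n fun q : ℝ × ℝ => φ q.1 q.2) (x : ι → ℝ) :
    ContDiff ℝ n (pairSum φ x) :=
  contDiff_pi.mpr fun i => ContDiff.sum fun k _ => hφ.comp <| contDiff_const.prodMk <|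
    (contDiff_apply ℝ ℝ i).sub (contDiff_apply ℝ ℝ k)

theorem HasFDerivAt.add_smul_pairSum_apply {φ φθ : ℝ → ℝ → ℝ}
    (hφθ : ∀ x t, HasDerivAt (fun t' => φ x t') (φθ x t) t) {x θ : ι → ℝ} {t : ℝ}
    {F' : ℝ × (ι → ℝ) →L[ℝ] ι → ℝ}
    (hF : HasFDerivAt (fun z : ℝ × (ι → ℝ) => z.2 + z.1 • pairSum φ x z.2) F' (t, θ))
    (c : ℝ) (v : ι → ℝ) :
    F' (c, v) = (1 + t • weightedLaplacian (fun i k => φθ (x i - x k) (θ i - θ k))) *ᵥ v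
      + c • pairSum φ x θ := by
  have hline : HasDerivAt (fun s : ℝ => (t + s * c, θ + s • v)) (c, v) 0 :=
    (((hasDerivAt_id 0).mul_const c).const_add t).prodMk
      (((hasDerivAt_id 0).smul_const v).const_add θ) |>.congr_deriv (by simp)
  have hcomp := hF.comp_hasDerivAt_of_eq 0 hline (by simp)
  have hdirect : HasDerivAt (fun s : ℝ => (θ + s • v) + (t + s * c) • pairSum φ x (θ + s • v))
      ((1 + t • weightedLaplacian (fun i k => φθ (x i - x k) (θ i - θ k))) *ᵥ v
        + c • pairSum φ x θ) 0 := by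
    have := (((hasDerivAt_id 0).smul_const v).const_add θ).add
      ((((hasDerivAt_id 0).mul_const c).const_add t).smul (hasDerivAt_pairSum_add_smul hφθ x θ v))
    refine this.congr_deriv ?_
    simp [add_mulVec, smul_mulVec, add_assoc]
  exact hcomp.unique hdirect

end FinitePairs

theorem stmt15_general (N : ℕ)
    (ψ ψx ψxθ : ℝ → ℝ → ℝ)
    (hC2 : ContDiff ℝ 2 (fun q : ℝ × ℝ => ψ q.1 q.2))
    (hψx : ∀ x t, HasDerivAt (fun x' => ψ x' t) (ψx x t) x)
    (hψxθ : ∀ x t, HasDerivAt (fun t' => ψx x t') (ψxθ x t) t)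
    (hpos : ∀ x t, 0 ≤ ψxθ x t)
    (hsym : ∀ x t, ψ (-x) (-t) = ψ x t)
    (θlam : ℝ → (Fin N → ℝ) × (Fin N → ℝ) → Fin N → ℝ)
    (hθlam : ∀ lam : ℝ, 0 ≤ lam → ∀ (q : (Fin N → ℝ) × (Fin N → ℝ)) (i : Fin N),
      q.2 i = θlam lam q i + lam * ∑ j ∈ Finset.univ.erase i,
        ψx (q.1 i - q.1 j) (θlam lam q i - θlam lam q j))
    (A : ℝ → (Fin N → ℝ) × (Fin N → ℝ) → Matrix (Fin N) (Fin N) ℝ)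
    (hA : ∀ (lam : ℝ) (q : (Fin N → ℝ) × (Fin N → ℝ)) (i j : Fin N),
      A lam q i j =
        if i = j then
          1 + lam * ∑ k ∈ Finset.univ.erase i,
            ψxθ (q.1 i - q.1 k) (θlam lam q i - θlam lam q k)
        else -(lam * ψxθ (q.1 i - q.1 j) (θlam lam q i - θlam lam q j))) :
    ∀ lam : ℝ, 0 ≤ lam → ∀ q : (Fin N → ℝ) × (Fin N → ℝ),
      IsUnit (A lam q).det ∧
      ∀ i : Fin N,
        HasDerivWithinAt (fun μ => θlam μ q i)
          (-∑ j : Fin N, ∑ k ∈ Finset.univ.erase j,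
            (A lam q)⁻¹ i j * ψx (q.1 j - q.1 k) (θlam lam q j - θlam lam q k))
          (Set.Ici 0) lam := by
  intro lam hlam q
  have hodd := partial_fst_odd_of_even hψx hsym
  have hmono : ∀ c, Monotone (ψx c) := fun c => monotone_of_deriv_nonneg
    (fun t => (hψxθ c t).differentiableAt) fun t => (hψxθ c t).deriv ▸ hpos c t
  have hAeq : A lam q = 1 + lam • weightedLaplacian
      (fun i k => ψxθ (q.1 i - q.1 k) (θlam lam q i - θlam lam q k)) := by
    ext i j
    by_cases hij : i = j <;> simp [hA, hij, weightedLaplacian, one_apply]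
  have hunit : IsUnit (A lam q).det := hAeq ▸ isUnit_det_one_add_smul_weightedLaplacian
    (fun _ _ => hpos _ _) (fun i k => by
      rw [← partial_snd_even_of_odd hψxθ hodd, neg_sub, neg_sub]) hlam
  refine ⟨hunit, fun i => ?_⟩
  have hbethe : ∀ μ, 0 ≤ μ → θlam μ q + μ • pairSum ψx q.1 (θlam μ q) = q.2 :=
    fun μ hμ => funext fun i => (hθlam μ hμ q i).symm
  have hF : ContDiff ℝ 1 fun z : ℝ × (Fin N → ℝ) => z.2 + z.1 • pairSum ψx q.1 z.2 :=
    contDiff_snd.add <| contDiff_fst.smul <|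
      (contDiff_pairSum (contDiff_uncurry_of_hasDerivAt_fst hC2 hψx) q.1).comp contDiff_snd
  have hstrict := hF.contDiffAt (x := (lam, θlam lam q)).hasStrictFDerivAt one_ne_zero
  have happly := hstrict.hasFDerivAt.add_smul_pairSum_apply hψxθ
  rw [← hAeq] at happly
  have hderiv : HasDerivWithinAt (fun μ => θlam μ q)
      (-((A lam q)⁻¹ *ᵥ pairSum ψx q.1 (θlam lam q))) (Set.Ici 0) lam := by
    refine hstrict.hasDerivWithinAt_of_unique_solution
      (ContinuousLinearMap.isInvertible_of_injective _ fun v w h => ?_) ?_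
      fun μ hμ y hy => injective_add_smul_pairSum hmono hodd q.1 hμ ?_
    · refine mulVec_injective_iff_isUnit.mpr ((isUnit_iff_isUnit_det _).mpr hunit) ?_
      simpa [happly] using h
    · rw [happly, mulVec_neg, mulVec_mulVec, mul_nonsing_inv _ hunit, one_mulVec, one_smul,
        neg_add_cancel]
    · exact hy.trans ((hbethe lam hlam).trans (hbethe μ hμ).symm)
  simpa only [Pi.neg_apply, mulVec, dotProduct, pairSum, mul_sum]
    using hasDerivWithinAt_pi.mp hderiv i

/-- Differentiability of the asymptotic momenta along the TT̄-flow `λ ↦ λψ`: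
for `λ ≥ 0`, the matrix `A^λ` is invertible and
`∂θᵢ^λ/∂λ = −∑ⱼ∑_{k≠j} (A^λ)⁻¹ᵢⱼ ψ_x(xⱼ−x_k, θⱼ^λ−θ_k^λ)`. -/
theorem stmt15 (N : ℕ) (ε : ℝ) (hε : 0 < ε)
    (ψ ψx ψθ ψxθ : ℝ → ℝ → ℝ)
    (hC2 : ContDiff ℝ 2 (fun q : ℝ × ℝ => ψ q.1 q.2))
    (hψx : ∀ x t, HasDerivAt (fun x' => ψ x' t) (ψx x t) x)
    (hψθ : ∀ x t, HasDerivAt (fun t' => ψ x t') (ψθ x t) t)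
    (hψxθ : ∀ x t, HasDerivAt (fun t' => ψx x t') (ψxθ x t) t)
    (hpos : ∀ x t, 0 ≤ ψxθ x t)
    (hsym : ∀ x t, ψ (-x) (-t) = ψ x t)
    (hrange : ∀ x t, ε ≤ |x| → ψx x t = 0)
    (θlam : ℝ → (Fin N → ℝ) × (Fin N → ℝ) → Fin N → ℝ)
    (hθlam : ∀ lam : ℝ, 0 ≤ lam → ∀ (q : (Fin N → ℝ) × (Fin N → ℝ)) (i : Fin N),
      q.2 i = θlam lam q i + lam * ∑ j ∈ Finset.univ.erase i,
        ψx (q.1 i - q.1 j) (θlam lam q i - θlam lam q j))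
    (A : ℝ → (Fin N → ℝ) × (Fin N → ℝ) → Matrix (Fin N) (Fin N) ℝ)
    (hA : ∀ (lam : ℝ) (q : (Fin N → ℝ) × (Fin N → ℝ)) (i j : Fin N),
      A lam q i j =
        if i = j then
          1 + lam * ∑ k ∈ Finset.univ.erase i,
            ψxθ (q.1 i - q.1 k) (θlam lam q i - θlam lam q k)
        else -(lam * ψxθ (q.1 i - q.1 j) (θlam lam q i - θlam lam q j))) :
    ∀ lam : ℝ, 0 ≤ lam → ∀ q : (Fin N → ℝ) × (Fin N → ℝ),
      IsUnit (A lam q).det ∧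
      ∀ i : Fin N,
        HasDerivWithinAt (fun μ => θlam μ q i)
          (-∑ j : Fin N, ∑ k ∈ Finset.univ.erase j,
            (A lam q)⁻¹ i j * ψx (q.1 j - q.1 k) (θlam lam q j - θlam lam q k))
          (Set.Ici 0) lam :=
  stmt15_general N ψ ψx ψxθ hC2 hψx hψxθ hpos hsym θlam hθlam A hA
end
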